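/- Let l = m·s with |l| > m > 1, gcd(m,s) = 1, m dividing k₁ and k₂, and suppose x·k₁ = y·k₂ for some nonzero s-numbers x, y. Then there exist surjective group homomorphisms G(l,m;k₁) → G(l,m;k₂) and G(l,m;k₂) → G(l,m;k₁), where G(l,m;k) = ⟨a,t ∣ t⁻¹a⁻ᵏtaˡt⁻¹aᵏt = aᵐ⟩. -/

import Mathlib

/-- A nonzero integer `n` is an `s`-number if every prime dividing `n` divides `s`. -/
def IsSNumber (s n : ℤ) : Prop := ∀ p : ℤ, Prime p → p ∣ n → p ∣ s

/-- The relator `t⁻¹a⁻ᵏtaˡt⁻¹aᵏta⁻ᵐ` in the free group on `a` (= `of true`) and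
`t` (= `of false`). -/
def Grel (l m k : ℤ) : FreeGroup Bool :=
  (FreeGroup.of false)⁻¹ * (FreeGroup.of true) ^ (-k) * (FreeGroup.of false) *
    (FreeGroup.of true) ^ l * (FreeGroup.of false)⁻¹ * (FreeGroup.of true) ^ k *
    (FreeGroup.of false) * (FreeGroup.of true) ^ (-m)

/-- The one-relator group `G(l,m;k) = ⟨a, t ∣ t⁻¹a⁻ᵏtaˡt⁻¹aᵏt = aᵐ⟩`. -/
abbrev GG (l m k : ℤ) := PresentedGroup ({Grel l m k} : Set (FreeGroup Bool))

/-!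
In `G(l,m;k')` the element `b = t⁻¹ a^k' t` satisfies `b⁻¹aˡb = aᵐ` with `l = ms`, so conjugation by
`bᵖ` turns `a^(m sᵖ j)` into `a^(m j)`. Hence if `r k = sᵖ k'` and `m ∣ k'`, the elements `aʳ` and
`T = bᵖt` satisfy `T⁻¹(aʳ)ᵏT = b`, and then the defining relation of `G(l,m;k)`. They generate:
`b` and then `t` are recovered from them, `aᵐ` is a conjugate of `a^(m s^N)`, a power of `aʳ`
when `r` is an `s`-number, and `a` lies in the group generated by `aʳ` and `aᵐ` since `r` is
coprime to `m`. The hypothesis `x k₁ = y k₂` yields such an `r` in both directions.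
-/

theorem IsSNumber.exists_dvd_pow {s n : ℤ} (hn : n ≠ 0) (h : IsSNumber s n) :
    ∃ N : ℕ, n ∣ s ^ N := by
  induction n using UniqueFactorizationMonoid.induction_on_prime with
  | h₁ => exact absurd rfl hn
  | h₂ u hu => exact ⟨0, hu.dvd⟩
  | h₃ n p hn0 hp ih =>
    obtain ⟨N, hN⟩ := ih hn0 fun q hq hqn => h q hq (dvd_mul_of_dvd_right hqn p)
    exact ⟨N + 1, pow_succ' s N ▸ mul_dvd_mul (h p hp (dvd_mul_right p n)) hN⟩

theorem exists_dvd_pow_mul_eq_pow_mul {s x y k₁ k₂ : ℤ} {q p : ℕ} (hx : x ∣ s ^ q)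
    (hy : y ∣ s ^ p) (he : x * k₁ = y * k₂) : ∃ r : ℤ, r ∣ s ^ (q + p) ∧ r * k₁ = s ^ p * k₂ := by
  obtain ⟨d, hd⟩ := hy
  refine ⟨x * d, pow_add s q p ▸ mul_dvd_mul hx (Dvd.intro_left y hd.symm), ?_⟩
  rw [hd, mul_right_comm, he]
  ring

section ConjZpow

variable {G : Type*} [Group G] {a b : G}

theorem conj_zpow_mul_of_conj_zpow {l m : ℤ} (h : b⁻¹ * a ^ l * b = a ^ m) (j : ℤ) :
    b⁻¹ * a ^ (l * j) * b = a ^ (m * j) := by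
  have hconj := conj_zpow (a := b⁻¹) (b := a ^ l) (i := j)
  rw [inv_inv] at hconj
  rw [zpow_mul, zpow_mul, ← h, hconj]

theorem conj_pow_zpow_of_conj_zpow {m s : ℤ} (h : b⁻¹ * a ^ (m * s) * b = a ^ m) (n : ℕ) (j : ℤ) :
    (b ^ n)⁻¹ * a ^ (m * s ^ n * j) * b ^ n = a ^ (m * j) := by
  induction n generalizing j with
  | zero => simp
  | succ n ih =>
    calc (b ^ (n + 1))⁻¹ * a ^ (m * s ^ (n + 1) * j) * b ^ (n + 1)
        = b⁻¹ * ((b ^ n)⁻¹ * a ^ (m * s ^ n * (s * j)) * b ^ n) * b := by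
          rw [show m * s ^ (n + 1) * j = m * s ^ n * (s * j) by ring, pow_succ]; group
      _ = a ^ (m * j) := by rw [ih, ← mul_assoc, conj_zpow_mul_of_conj_zpow h]

theorem mem_of_conj_zpow {m s r : ℤ} {N : ℕ} {H : Subgroup G}
    (h : b⁻¹ * a ^ (m * s) * b = a ^ m) (har : a ^ r ∈ H) (hb : b ∈ H) (hr : r ∣ s ^ N)
    (hsm : IsCoprime s m) : a ∈ H := by
  obtain ⟨d, hd⟩ := hr
  have ham : a ^ m ∈ H := by
    have hpow : a ^ (m * s ^ N * 1) ∈ H := by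
      rw [hd, show m * (r * d) * 1 = r * (m * d) by ring, zpow_mul]
      exact zpow_mem har _
    rw [← mul_one m, ← conj_pow_zpow_of_conj_zpow h N 1]
    exact mul_mem (mul_mem (inv_mem (pow_mem hb N)) hpow) (pow_mem hb N)
  obtain ⟨u, v, huv⟩ := hsm.pow_left.of_isCoprime_of_dvd_left (Dvd.intro d hd.symm)
  rw [← zpow_one a, ← huv, zpow_add, zpow_mul', zpow_mul']
  exact mul_mem (zpow_mem har u) (zpow_mem ham v)

end ConjZpow

theorem lift_grel_eq_one_iff {G : Type*} [Group G] (A T : G) (l m k : ℤ) :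
    FreeGroup.lift (fun i => cond i A T) (Grel l m k) = 1 ↔
      (T⁻¹ * A ^ k * T)⁻¹ * A ^ l * (T⁻¹ * A ^ k * T) = A ^ m := by
  have hlift : FreeGroup.lift (fun i => cond i A T) (Grel l m k) =
      (T⁻¹ * A ^ k * T)⁻¹ * A ^ l * (T⁻¹ * A ^ k * T) * (A ^ m)⁻¹ := by
    simp only [Grel, map_mul, map_inv, map_zpow, FreeGroup.lift_apply_of, cond_true, cond_false]
    rw [zpow_neg, zpow_neg]
    group
  rw [hlift, mul_inv_eq_one]

namespace GG

variable {l m k : ℤ}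

noncomputable def a : GG l m k := PresentedGroup.of true

noncomputable def t : GG l m k := PresentedGroup.of false

noncomputable def b : GG l m k := t⁻¹ * a ^ k * t

theorem b_inv_mul_zpow_l_mul_b : (b : GG l m k)⁻¹ * a ^ l * b = a ^ m := by
  have hmk : FreeGroup.lift (fun i => cond i (a : GG l m k) t) = PresentedGroup.mk _ :=
    FreeGroup.ext_hom _ _ fun i => by cases i <;> rfl
  exact (lift_grel_eq_one_iff _ _ l m k).mp (hmk ▸ PresentedGroup.one_of_mem rfl)

theorem eq_top_of_mem {H : Subgroup (GG l m k)} (ha : a ∈ H) (ht : t ∈ H) : H = ⊤ :=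
  eq_top_iff.mpr fun g _ => PresentedGroup.generated_by _ H (fun i => by cases i <;> assumption) g

theorem exists_surjective_hom {s k' r : ℤ} {p N : ℕ} (hl : l = m * s) (hk' : m ∣ k')
    (hr : r * k = s ^ p * k') (hrN : r ∣ s ^ N) (hsm : IsCoprime s m) :
    ∃ φ : GG l m k →* GG l m k', Function.Surjective φ := by
  have hconj : (b : GG l m k')⁻¹ * a ^ (m * s) * b = a ^ m := hl ▸ b_inv_mul_zpow_l_mul_b
  obtain ⟨c, rfl⟩ := hk'
  have hTb : (b ^ p * t)⁻¹ * (a ^ r) ^ k * (b ^ p * t) = (b : GG l m (m * c)) := by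
    calc (b ^ p * t)⁻¹ * (a ^ r) ^ k * (b ^ p * t)
        = t⁻¹ * ((b ^ p)⁻¹ * a ^ (m * s ^ p * c) * b ^ p) * t := by
          rw [← zpow_mul, hr, show s ^ p * (m * c) = m * s ^ p * c by ring]; group
      _ = b := by rw [conj_pow_zpow_of_conj_zpow hconj]; rfl
  have hrel : ∀ w ∈ ({Grel l m k} : Set _),
      FreeGroup.lift (fun i => cond i (a ^ r) (b ^ p * t : GG l m (m * c))) w = 1 := by
    rintro _ rfl
    rw [lift_grel_eq_one_iff, hTb, ← zpow_mul, ← zpow_mul, mul_comm r, mul_comm r]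
    exact conj_zpow_mul_of_conj_zpow b_inv_mul_zpow_l_mul_b r
  set φ := PresentedGroup.toGroup hrel
  have har : a ^ r ∈ φ.range := ⟨PresentedGroup.of true, PresentedGroup.toGroup.of hrel⟩
  have hT : b ^ p * t ∈ φ.range := ⟨PresentedGroup.of false, PresentedGroup.toGroup.of hrel⟩
  have hb : b ∈ φ.range := hTb ▸ mul_mem (mul_mem (inv_mem hT) (zpow_mem har k)) hT
  have ht : t ∈ φ.range := by
    simpa using mul_mem (inv_mem (pow_mem hb p)) hT
  exact ⟨φ, MonoidHom.range_eq_top.mp (eq_top_of_mem (mem_of_conj_zpow hconj har hb hrN hsm) ht)⟩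

end GG

theorem stmt_12_general (l m s k₁ k₂ x y : ℤ) (hl : l = m * s)
    (hcop : Int.gcd m s = 1)
    (hk₁ : m ∣ k₁) (hk₂ : m ∣ k₂)
    (hx : x ≠ 0) (hy : y ≠ 0) (hxs : IsSNumber s x) (hys : IsSNumber s y)
    (he : x * k₁ = y * k₂) :
    (∃ φ : GG l m k₁ →* GG l m k₂, Function.Surjective φ) ∧
    (∃ ψ : GG l m k₂ →* GG l m k₁, Function.Surjective ψ) := by
  have hsm : IsCoprime s m := (Int.isCoprime_iff_gcd_eq_one.mpr hcop).symm
  obtain ⟨q, hxq⟩ := hxs.exists_dvd_pow hx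
  obtain ⟨p, hyp⟩ := hys.exists_dvd_pow hy
  obtain ⟨r, hr, hrk⟩ := exists_dvd_pow_mul_eq_pow_mul hxq hyp he
  obtain ⟨r', hr', hrk'⟩ := exists_dvd_pow_mul_eq_pow_mul hyp hxq he.symm
  exact ⟨GG.exists_surjective_hom hl hk₂ hrk hr hsm, GG.exists_surjective_hom hl hk₁ hrk' hr' hsm⟩

theorem stmt_12 (l m s k₁ k₂ x y : ℤ) (hl : l = m * s)
    (h1 : |l| > m) (h2 : m > 1) (hcop : Int.gcd m s = 1)
    (hk₁ : m ∣ k₁) (hk₂ : m ∣ k₂)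
    (hx : x ≠ 0) (hy : y ≠ 0) (hxs : IsSNumber s x) (hys : IsSNumber s y)
    (he : x * k₁ = y * k₂) :
    (∃ φ : GG l m k₁ →* GG l m k₂, Function.Surjective φ) ∧
    (∃ ψ : GG l m k₂ →* GG l m k₁, Function.Surjective ψ) :=
  stmt_12_general l m s k₁ k₂ x y hl hcop hk₁ hk₂ hx hy hxs hys he
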